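/- arXiv:1502.04604 — 4 statements merged into one kernel-verified Lean document; each statement's English description precedes it below -/
import Mathlib

section
/- Let n ≥ 1 and set k = (n−1)/2 if n is odd and k = n/2 if n is even. For all x = (x_1,…,x_n) ∈ ℝ^n, the antisymmetric multivariate cosine function satisfies cos⁻_{ρ₁}(x) = (−1)^k · 2^{(n−1)²} · ∏_{1 ≤ i < j ≤ n} sin(π(x_i + x_j)/2) · sin(π(x_i − x_j)/2), where ρ₁ = (n−1, n−2, …, 1, 0). -/
/-!
Writing `y i = cos (π x i)`, the Chebyshev identity `cos (π j x) = T_j (cos (π x))` turns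
`cos⁻_λ` for `λ = (0, 1, …, n - 1)` into `det (T_j (y i))`. Since `T_j` has leading coefficient
`2 ^ (j - 1)`, this is `∏ j, 2 ^ (j - 1)` times the Vandermonde determinant `∏ i < j, (y j - y i)`,
and each factor `y j - y i` is `2 sin (π (x i + x j) / 2) sin (π (x i - x j) / 2)`.
Finally `ρ₁` is `(0, 1, …, n - 1)` reversed, and reversing `Fin n` has sign
`(-1) ^ (n choose 2) = (-1) ^ ⌊n / 2⌋`.
-/

open Real Finset

/-- The antisymmetric multivariate cosine function
`cos⁻_λ(x) = Σ_{σ ∈ S_n} sgn(σ) ∏_{i=1}^n cos(π λ_{σ(i)} x_i)`. -/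
noncomputable def cosMinus (n : ℕ) (lam x : Fin n → ℝ) : ℝ :=
  ∑ σ : Equiv.Perm (Fin n),
    ((Equiv.Perm.sign σ : ℤ) : ℝ) * ∏ i : Fin n, Real.cos (Real.pi * lam (σ i) * x i)

theorem cosMinus_eq_det (n : ℕ) (lam x : Fin n → ℝ) :
    cosMinus n lam x = (Matrix.of fun i j => cos (π * lam j * x i)).det := by
  rw [← Matrix.det_transpose, Matrix.det_apply']
  rfl

theorem cosMinus_comp_perm (n : ℕ) (lam x : Fin n → ℝ) (σ : Equiv.Perm (Fin n)) :
    cosMinus n (lam ∘ σ) x = Equiv.Perm.sign σ * cosMinus n lam x := by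
  rw [cosMinus_eq_det, cosMinus_eq_det, ← Matrix.det_permute']
  rfl

theorem Fin.sum_card_Ioi (n : ℕ) : ∑ i : Fin n, #(Ioi i) = n.choose 2 := by
  simp only [Fin.card_Ioi]
  rw [Fin.sum_univ_eq_sum_range (fun i => n - 1 - i), sum_range_reflect (fun i => i) n,
    sum_range_id, Nat.choose_two_right]

theorem Fin.sign_revPerm (n : ℕ) :
    Equiv.Perm.sign (Fin.revPerm : Equiv.Perm (Fin n)) = (-1) ^ n.choose 2 := by
  rw [Equiv.Perm.sign_eq_prod_prod_Ioi]
  simp only [Fin.revPerm_apply, Fin.rev_lt_rev]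
  rw [prod_congr rfl fun i _ => prod_congr rfl fun j hj => if_neg (not_lt.2 (mem_Ioi.1 hj).le)]
  simp only [Finset.prod_const, prod_pow_eq_pow_sum, Fin.sum_card_Ioi]

theorem neg_one_pow_choose_two {R : Type*} [Monoid R] [HasDistribNeg R] (n : ℕ) :
    (-1 : R) ^ n.choose 2 = (-1) ^ (n / 2) := by
  induction n using Nat.twoStepInduction with
  | zero => rfl
  | one => rfl
  | more n ih _ =>
    have hchoose : (n + 2).choose 2 = n.choose 2 + 2 * n + 1 := by
      rw [Nat.choose_succ_succ', Nat.choose_succ_succ' n 1, Nat.choose_one_right,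
        Nat.choose_one_right]
      ring
    rw [hchoose, show (n + 2) / 2 = n / 2 + 1 by omega, pow_succ, pow_succ, pow_add, pow_mul,
      neg_one_sq, one_pow, mul_one, ih]

theorem Fin.sum_sub_one_add_choose_two (n : ℕ) :
    ∑ j : Fin n, ((j : ℕ) - 1) + n.choose 2 = (n - 1) ^ 2 := by
  rw [Fin.sum_univ_eq_sum_range (fun j => j - 1)]
  induction n with
  | zero => rfl
  | succ n ih =>
    rw [sum_range_succ, Nat.choose_succ_succ', Nat.choose_one_right]
    rcases n with _ | n
    · rfl
    · simp only [Nat.add_sub_cancel] at ih ⊢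
      linarith [ih]

section Chebyshev

open Polynomial Polynomial.Chebyshev

theorem Matrix.det_chebyshevT_eval {K : Type*} [Field K] [NeZero (2 : K)] {n : ℕ}
    (v : Fin n → K) :
    (Matrix.of fun i j : Fin n => (T K j).eval (v i)).det
      = (∏ j : Fin n, (2 : K) ^ ((j : ℕ) - 1)) * ∏ i : Fin n, ∏ j ∈ Ioi i, (v j - v i) := by
  set c : Fin n → K := fun j => 2 ^ ((j : ℕ) - 1)
  have hc : ∀ j, c j ≠ 0 := fun j => pow_ne_zero _ (NeZero.ne 2)
  set p : Fin n → K[X] := fun j => C (c j)⁻¹ * T K j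
  have hdeg : ∀ j, (p j).natDegree = j := fun j => by
    rw [natDegree_C_mul (inv_ne_zero (hc j)), natDegree_T]; rfl
  have hmonic : ∀ j, (p j).Monic := fun j => by
    rw [Monic, leadingCoeff_mul, leadingCoeff_C, leadingCoeff_T]
    exact inv_mul_cancel₀ (hc j)
  have hT : ∀ i (j : Fin n), (T K j).eval (v i) = c j * (p j).eval (v i) := fun i j => by
    rw [eval_mul, eval_C, mul_inv_cancel_left₀ (hc j)]
  simp only [hT]
  rw [show (Matrix.of fun i j => c j * (p j).eval (v i)).det
      = (∏ j, c j) * (Matrix.of fun i j => (p j).eval (v i)).det from Matrix.det_mul_row c _,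
    ← Matrix.det_eval_matrixOfPolynomials_eq_det_vandermonde v p hdeg hmonic,
    Matrix.det_vandermonde]

theorem cosMinus_natCast (n : ℕ) (x : Fin n → ℝ) :
    cosMinus n (fun j => ((j : ℕ) : ℝ)) x
      = 2 ^ ((n - 1) ^ 2) * ∏ i : Fin n, ∏ j ∈ Ioi i,
          sin (π * (x i + x j) / 2) * sin (π * (x i - x j) / 2) := by
  have hT : ∀ i j : Fin n, cos (π * (j : ℕ) * x i) = (T ℝ (j : ℕ)).eval (cos (π * x i)) :=
    fun i j => by rw [T_real_cos]; push_cast; ring_nf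
  have hsub : ∀ i j : Fin n, cos (π * x j) - cos (π * x i)
      = 2 * (sin (π * (x i + x j) / 2) * sin (π * (x i - x j) / 2)) := fun i j => by
    rw [cos_sub_cos, show π * x j - π * x i = -(π * (x i - x j)) by ring, neg_div, sin_neg,
      show π * x j + π * x i = π * (x i + x j) by ring]
    ring
  rw [cosMinus_eq_det]
  simp only [hT]
  rw [Matrix.det_chebyshevT_eval]
  simp only [hsub, prod_mul_distrib, Finset.prod_const, prod_pow_eq_pow_sum, Fin.sum_card_Ioi]
  rw [← mul_assoc, ← pow_add, Fin.sum_sub_one_add_choose_two]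

end Chebyshev

theorem antisymmetric_cos_rho1_general (n : ℕ) (k : ℕ)
    (hk : (Odd n → 2 * k + 1 = n) ∧ (Even n → 2 * k = n)) (x : Fin n → ℝ) :
    cosMinus n (fun i => (n : ℝ) - 1 - ((i : ℕ) : ℝ)) x
      = (-1 : ℝ) ^ k * (2 : ℝ) ^ ((n - 1) ^ 2) *
        ∏ i : Fin n, ∏ j ∈ Finset.Ioi i,
          Real.sin (Real.pi * (x i + x j) / 2) * Real.sin (Real.pi * (x i - x j) / 2) := by
  have hkn : k = n / 2 := by
    rcases Nat.even_or_odd n with h | h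
    · have := hk.2 h; omega
    · have := hk.1 h; omega
  have hρ : (fun i : Fin n => (n : ℝ) - 1 - ((i : ℕ) : ℝ))
      = (fun j : Fin n => ((j : ℕ) : ℝ)) ∘ Fin.revPerm := by
    funext i
    simp only [Function.comp_apply, Fin.revPerm_apply, Fin.val_rev]
    rw [Nat.cast_sub (by omega)]
    push_cast
    ring
  rw [hρ, cosMinus_comp_perm, cosMinus_natCast, Fin.sign_revPerm, neg_one_pow_choose_two, hkn]
  push_cast
  ring

theorem antisymmetric_cos_rho1 (n : ℕ) (hn : 1 ≤ n) (k : ℕ)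
    (hk : (Odd n → 2 * k + 1 = n) ∧ (Even n → 2 * k = n)) (x : Fin n → ℝ) :
    cosMinus n (fun i => (n : ℝ) - 1 - ((i : ℕ) : ℝ)) x
      = (-1 : ℝ) ^ k * (2 : ℝ) ^ ((n - 1) ^ 2) *
        ∏ i : Fin n, ∏ j ∈ Finset.Ioi i,
          Real.sin (Real.pi * (x i + x j) / 2) * Real.sin (Real.pi * (x i - x j) / 2) :=
  antisymmetric_cos_rho1_general n k hk x
end

section
/- Let n ≥ 1 and let k, k' ∈ P^{+}, i.e., k = (k_1,…,k_n) and k' = (k'_1,…,k'_n) are integer vectors with k_1 ≥ k_2 ≥ … ≥ k_n ≥ 0 and k'_1 ≥ k'_2 ≥ … ≥ k'_n ≥ 0. Then ∫_{F(S̃_n^aff)} cos⁺_k(x) cos⁺_{k'}(x) dx = h_k · H_k · δ_{k,k'}, where dx is n-dimensional Lebesgue measure. -/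
open Real Finset MeasureTheory

/-- The symmetric multivariate cosine function
`cos⁺_λ(x) = Σ_{σ ∈ S_n} ∏_{i=1}^n cos(π λ_{σ(i)} x_i)`. -/
noncomputable def cosPlus (n : ℕ) (lam x : Fin n → ℝ) : ℝ :=
  ∑ σ : Equiv.Perm (Fin n), ∏ i : Fin n, Real.cos (Real.pi * lam (σ i) * x i)

/-- The fundamental domain `F(S̃_n^aff) = {x ∈ ℝ^n : 1 ≥ x_1 ≥ x_2 ≥ … ≥ x_n ≥ 0}`. -/
def Fdom (n : ℕ) : Set (Fin n → ℝ) :=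
  {x | (∀ i j : Fin n, i ≤ j → x j ≤ x i) ∧ ∀ i : Fin n, 0 ≤ x i ∧ x i ≤ 1}

/-- `H_k`, the order of the stabilizer of `k` under the permutation action of `S_n`
(where `σ(k)_i = k_{σ(i)}`, i.e. `σ(k) = k ∘ σ`). -/
def Hstab {n : ℕ} {α : Type*} [DecidableEq α] (k : Fin n → α) : ℕ :=
  (Finset.univ.filter fun σ : Equiv.Perm (Fin n) => k ∘ σ = k).card

/-! The integrand is invariant under permutations of the coordinates, and up to the null set
where two coordinates coincide the cube `[0,1]^n` is the disjoint union of the `n!` images of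
`F` under such permutations; so the integral over `F` is `1/n!` times the integral over the cube.
On the cube, expanding both sums and applying Fubini and the orthogonality of `cos (π a t)` on
`[0,1]` leaves `h_k` times the number of pairs `(σ, τ)` with `k ∘ σ = k' ∘ τ`. Two antitone
vectors that are rearrangements of each other coincide, so this count vanishes unless `k = k'`,
and then it is `n! · H_k`. -/

open Equiv Set Function
open scoped Nat

lemma integral_cos_pi_int_mul (m : ℤ) :
    ∫ t in (0 : ℝ)..1, cos (π * m * t) = if m = 0 then 1 else 0 := by
  split_ifs with hm
  · simp [hm]
  · have hc : π * m ≠ 0 := mul_ne_zero pi_ne_zero (Int.cast_ne_zero.mpr hm)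
    rw [intervalIntegral.integral_comp_mul_left (fun t => cos t) hc, integral_cos, mul_one,
      mul_comm, sin_int_mul_pi]
    simp

lemma setIntegral_Icc_cos_mul_cos (a b : ℕ) :
    ∫ t in Icc (0 : ℝ) 1, cos (π * a * t) * cos (π * b * t)
      = if a = b then (if a = 0 then 1 else 1 / 2) else 0 := by
  have hprod (t : ℝ) : cos (π * a * t) * cos (π * b * t)
      = (cos (π * ((a - b : ℤ) : ℝ) * t) + cos (π * ((a + b : ℤ) : ℝ) * t)) / 2 := by
    push_cast
    rw [show π * (a - b) * t = π * a * t - π * b * t by ring,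
      show π * (a + b) * t = π * a * t + π * b * t by ring, cos_sub, cos_add]
    ring
  have hcont (m : ℤ) : IntervalIntegrable (fun t => cos (π * m * t)) volume 0 1 :=
    (by fun_prop : Continuous fun t : ℝ => cos (π * m * t)).intervalIntegrable _ _
  rw [integral_Icc_eq_integral_Ioc, ← intervalIntegral.integral_of_le zero_le_one]
  simp_rw [hprod]
  rw [intervalIntegral.integral_div, intervalIntegral.integral_add (hcont _) (hcont _),
    integral_cos_pi_int_mul, integral_cos_pi_int_mul]
  split_ifs <;> first | omega | norm_num

lemma setIntegral_Icc_prod {ι : Type*} [Fintype ι] (g : ι → ℝ → ℝ) (a b : ι → ℝ) :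
    ∫ x in Icc a b, ∏ i, g i (x i) = ∏ i, ∫ t in Icc (a i) (b i), g i t := by
  rw [← pi_univ_Icc, volume_pi, Measure.restrict_pi_pi, integral_fintype_prod_eq_prod]

lemma volume_setOf_apply_eq_apply {ι : Type*} [Fintype ι] {i j : ι} (hij : i ≠ j) :
    volume {x : ι → ℝ | x i = x j} = 0 := by
  classical
  let L : (ι → ℝ) →ₗ[ℝ] ℝ := (LinearMap.proj i : (ι → ℝ) →ₗ[ℝ] ℝ) - LinearMap.proj j
  have hL : L ≠ 0 := fun h => by
    simpa [L, Pi.single_eq_of_ne hij.symm] using LinearMap.congr_fun h (Pi.single i 1)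
  have hker : {x : ι → ℝ | x i = x j} = LinearMap.ker L := by
    ext x
    simp [L, sub_eq_zero]
  rw [hker]
  exact Measure.addHaar_submodule _ _ fun h => hL (LinearMap.ker_eq_top.mp h)

lemma volume_setOf_not_injective {ι : Type*} [Fintype ι] :
    volume {x : ι → ℝ | ¬ Injective x} = 0 := by
  have hsub : {x : ι → ℝ | ¬ Injective x} ⊆ ⋃ i, ⋃ j, ⋃ (_ : i ≠ j), {x | x i = x j} := by
    intro x hx
    simp only [Injective, not_forall] at hx
    obtain ⟨i, j, hxij, hij⟩ := hx
    exact mem_iUnion₂.mpr ⟨i, j, mem_iUnion.mpr ⟨hij, hxij⟩⟩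
  refine measure_mono_null hsub (measure_iUnion_null fun i => measure_iUnion_null fun j =>
    measure_iUnion_null fun hij => volume_setOf_apply_eq_apply hij)

section Fdom

variable {n : ℕ}

lemma mem_Fdom_iff {x : Fin n → ℝ} : x ∈ Fdom n ↔ x ∈ Set.Icc 0 1 ∧ Antitone x := by
  simp only [Fdom, mem_ofPred_eq, Set.mem_Icc, Pi.le_def, forall_and, Pi.zero_apply, Pi.one_apply]
  exact ⟨fun h => ⟨⟨h.2.1, h.2.2⟩, h.1⟩, fun h => ⟨h.2, h.1.1, h.1.2⟩⟩

lemma isClosed_Fdom : IsClosed (Fdom n) := by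
  have : Fdom n = Set.Icc 0 1 ∩ ⋂ (i : Fin n) (j : Fin n) (_ : i ≤ j), {x | x j ≤ x i} := by
    ext x
    simp only [mem_Fdom_iff, mem_inter_iff, mem_iInter, mem_ofPred_eq, Antitone]
  rw [this]
  exact isClosed_Icc.inter <| isClosed_iInter fun i => isClosed_iInter fun j =>
    isClosed_iInter fun _ => isClosed_le (continuous_apply j) (continuous_apply i)

lemma comp_perm_mem_Icc_iff {x : Fin n → ℝ} (σ : Perm (Fin n)) :
    x ∘ σ ∈ Set.Icc 0 1 ↔ x ∈ Set.Icc 0 1 := by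
  simp only [Set.mem_Icc, Pi.le_def, comp_apply, Pi.zero_apply, Pi.one_apply]
  exact and_congr (σ.forall_congr_right (q := fun i => 0 ≤ x i))
    (σ.forall_congr_right (q := fun i => x i ≤ 1))

lemma iUnion_preimage_comp_perm_Fdom :
    ⋃ σ : Perm (Fin n), (· ∘ σ) ⁻¹' Fdom n = Set.Icc 0 1 := by
  ext x
  simp only [mem_iUnion, Set.mem_preimage, mem_Fdom_iff]
  constructor
  · rintro ⟨σ, hσ, -⟩
    exact (comp_perm_mem_Icc_iff σ).mp hσ
  · intro hx
    refine ⟨Tuple.sort x * Fin.revPerm, (comp_perm_mem_Icc_iff _).mpr hx, ?_⟩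
    exact (Tuple.monotone_sort x).comp_antitone Fin.rev_anti

lemma aedisjoint_preimage_comp_perm_Fdom :
    Pairwise (AEDisjoint volume on fun σ : Perm (Fin n) => (· ∘ σ) ⁻¹' Fdom n) := by
  intro σ τ hστ
  refine measure_mono_null ?_ volume_setOf_not_injective
  rintro x ⟨hσ, hτ⟩ hx
  have heq := Tuple.unique_antitone (mem_Fdom_iff.mp hσ).2 (mem_Fdom_iff.mp hτ).2
  exact hστ (Equiv.ext fun i => hx (congrFun heq i))

lemma coe_piCongrLeft_perm_symm {α : Type*} [MeasurableSpace α] (σ : Perm (Fin n)) :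
    ⇑(MeasurableEquiv.piCongrLeft (fun _ : Fin n => α) σ.symm) = (· ∘ σ) := by
  ext x j
  simpa [MeasurableEquiv.coe_piCongrLeft] using
    Equiv.piCongrLeft_apply_apply (P := fun _ : Fin n => α) σ.symm x (σ j)

theorem setIntegral_Icc_eq_factorial_mul_setIntegral_Fdom {f : (Fin n → ℝ) → ℝ}
    (hf : IntegrableOn f (Set.Icc 0 1)) (hf_perm : ∀ (σ : Perm (Fin n)) x, f (x ∘ σ) = f x) :
    ∫ x in Set.Icc 0 1, f x = n ! * ∫ x in Fdom n, f x := by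
  have hpiece (σ : Perm (Fin n)) : ∫ x in (· ∘ σ) ⁻¹' Fdom n, f x = ∫ x in Fdom n, f x := by
    have := (volume_measurePreserving_piCongrLeft (fun _ : Fin n => ℝ) σ.symm)
      |>.setIntegral_preimage_emb (MeasurableEquiv.measurableEmbedding _) f (Fdom n)
    simpa only [coe_piCongrLeft_perm_symm, hf_perm] using this
  rw [← iUnion_preimage_comp_perm_Fdom, integral_iUnion_ae _ aedisjoint_preimage_comp_perm_Fdom,
    tsum_fintype]
  · simp [hpiece, Fintype.card_perm]
  · rwa [iUnion_preimage_comp_perm_Fdom]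
  · intro σ
    exact (isClosed_Fdom.measurableSet.preimage (by fun_prop)).nullMeasurableSet

end Fdom

section CosPlus

variable {n : ℕ}

@[fun_prop]
lemma continuous_cosPlus (lam : Fin n → ℝ) : Continuous (cosPlus n lam) := by
  unfold cosPlus
  fun_prop

lemma cosPlus_comp_perm (lam x : Fin n → ℝ) (σ : Perm (Fin n)) :
    cosPlus n lam (x ∘ σ) = cosPlus n lam x := by
  refine Fintype.sum_equiv (Equiv.mulRight σ⁻¹) _ _ fun ρ => ?_
  conv_rhs => rw [← Equiv.prod_comp σ]
  simp [Perm.mul_apply]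

lemma setIntegral_Icc_cosPlus_mul_cosPlus (k k' : Fin n → ℕ) :
    ∫ x in (Set.Icc 0 1 : Set (Fin n → ℝ)), cosPlus n (k ·) x * cosPlus n (k' ·) x
      = ∑ σ : Perm (Fin n), ∑ τ : Perm (Fin n),
          if k ∘ σ = k' ∘ τ then ∏ i, (if k i = 0 then (1 : ℝ) else 1 / 2) else 0 := by
  have hterm (σ τ : Perm (Fin n)) :
      ∫ x in (Set.Icc 0 1 : Set (Fin n → ℝ)),
          ∏ i, cos (π * k (σ i) * x i) * cos (π * k' (τ i) * x i)
        = if k ∘ σ = k' ∘ τ then ∏ i, (if k i = 0 then (1 : ℝ) else 1 / 2) else 0 := by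
    rw [setIntegral_Icc_prod (fun i t => cos (π * k (σ i) * t) * cos (π * k' (τ i) * t))]
    simp only [Pi.zero_apply, Pi.one_apply, setIntegral_Icc_cos_mul_cos, prod_ite_zero,
      funext_iff, comp_apply, Finset.mem_univ, forall_const,
      Equiv.prod_comp σ fun j => if k j = 0 then (1 : ℝ) else 1 / 2]
  have hint (σ τ : Perm (Fin n)) : IntegrableOn
      (fun x : Fin n → ℝ => ∏ i, cos (π * k (σ i) * x i) * cos (π * k' (τ i) * x i))
      (Set.Icc 0 1) :=
    (by fun_prop : Continuous _).integrableOn_Icc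
  simp only [cosPlus, sum_mul_sum, ← prod_mul_distrib]
  rw [integral_finsetSum _ fun σ _ => integrable_finsetSum _ fun τ _ => hint σ τ]
  exact sum_congr rfl fun σ _ => by
    rw [integral_finsetSum _ fun τ _ => hint σ τ]
    exact sum_congr rfl fun τ _ => hterm σ τ

end CosPlus

section Counting

variable {n : ℕ} {α : Type*}

lemma eq_of_comp_perm_eq_comp_perm [PartialOrder α] {k k' : Fin n → α} (hk : Antitone k)
    (hk' : Antitone k') {σ τ : Perm (Fin n)} (h : k ∘ σ = k' ∘ τ) : k = k' := by
  have hk'_eq : k' = k ∘ ⇑(σ * τ⁻¹) := by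
    ext i
    simpa using (congrFun h (τ⁻¹ i)).symm
  rw [hk'_eq] at hk' ⊢
  exact Tuple.unique_antitone (σ := 1) hk hk'

lemma card_comp_perm_eq_comp_perm [DecidableEq α] (k : Fin n → α) :
    #{p : Perm (Fin n) × Perm (Fin n) | k ∘ p.1 = k ∘ p.2} = n ! * Hstab k := by
  calc _ = #(Finset.univ ×ˢ ({ρ : Perm (Fin n) | k ∘ ρ = k} : Finset _)) :=
        card_nbij' (fun p => (p.2, p.1 * p.2⁻¹)) (fun q => (q.2 * q.1, q.1)) ?_ ?_ ?_ ?_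
    _ = n ! * Hstab k := by simp [card_product, Hstab, Fintype.card_perm]
  · intro p hp
    simp only [coe_filter, Finset.mem_univ, true_and, mem_ofPred_eq, coe_product, coe_univ,
      mem_prod, Set.mem_univ, Perm.coe_mul, Perm.coe_inv] at hp ⊢
    ext i
    simpa using congrFun hp (p.2⁻¹ i)
  · intro q hq
    simp only [coe_product, coe_univ, coe_filter, Finset.mem_univ, true_and, mem_prod,
      Set.mem_univ, mem_ofPred_eq, Perm.coe_mul] at hq ⊢
    ext i
    simpa using congrFun hq (q.1 i)
  · intro p _
    simp [mul_assoc]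
  · intro q _
    simp [mul_assoc]

lemma sum_sum_ite_comp_perm_eq_comp_perm [PartialOrder α] [DecidableEq α] {R : Type*}
    [Semiring R] {k k' : Fin n → α} (hk : Antitone k) (hk' : Antitone k') (c : R) :
    ∑ σ : Perm (Fin n), ∑ τ : Perm (Fin n), (if k ∘ σ = k' ∘ τ then c else 0)
      = if k = k' then n ! * Hstab k * c else 0 := by
  rw [← Fintype.sum_prod_type', sum_ite, sum_const_zero, add_zero, sum_const, nsmul_eq_mul]
  split_ifs with hkk
  · subst hkk
    rw [card_comp_perm_eq_comp_perm]
    push_cast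
    rfl
  · rw [filter_false_of_mem fun _ _ h => hkk (eq_of_comp_perm_eq_comp_perm hk hk' h),
      Finset.card_empty, Nat.cast_zero, zero_mul]

end Counting

theorem continuous_orthogonality_sym_integer_general (n : ℕ)
    (k k' : Fin n → ℕ)
    (hk : ∀ i j : Fin n, i ≤ j → k j ≤ k i)
    (hk' : ∀ i j : Fin n, i ≤ j → k' j ≤ k' i) :
    ∫ x in Fdom n,
        cosPlus n (fun i => (k i : ℝ)) x * cosPlus n (fun i => (k' i : ℝ)) x
      = (∏ i : Fin n, if k i = 0 then (1 : ℝ) else 1 / 2) * (Hstab k : ℝ) *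
          (if k = k' then (1 : ℝ) else 0) := by
  have hcube := setIntegral_Icc_eq_factorial_mul_setIntegral_Fdom
    (f := fun x => cosPlus n (k ·) x * cosPlus n (k' ·) x)
    (by fun_prop : Continuous _).integrableOn_Icc (fun σ x => by simp only [cosPlus_comp_perm])
  rw [setIntegral_Icc_cosPlus_mul_cosPlus, sum_sum_ite_comp_perm_eq_comp_perm hk hk'] at hcube
  refine mul_left_cancel₀ (Nat.cast_ne_zero.mpr n.factorial_ne_zero : (n ! : ℝ) ≠ 0) ?_
  split_ifs at hcube ⊢ <;> linear_combination -hcube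

theorem continuous_orthogonality_sym_integer (n : ℕ) (hn : 1 ≤ n)
    (k k' : Fin n → ℕ)
    (hk : ∀ i j : Fin n, i ≤ j → k j ≤ k i)
    (hk' : ∀ i j : Fin n, i ≤ j → k' j ≤ k' i) :
    ∫ x in Fdom n,
        cosPlus n (fun i => (k i : ℝ)) x * cosPlus n (fun i => (k' i : ℝ)) x
      = (∏ i : Fin n, if k i = 0 then (1 : ℝ) else 1 / 2) * (Hstab k : ℝ) *
          (if k = k' then (1 : ℝ) else 0) :=
  continuous_orthogonality_sym_integer_general n k k' hk hk'
end

section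
/- (AMDCT VI discrete orthogonality) Let N, n ≥ 1 and let k, k' ∈ D_N^−, i.e., integer vectors with N−1 ≥ k_1 > … > k_n ≥ 0 and N−1 ≥ k'_1 > … > k'_n ≥ 0. Then Σ_{r ∈ D_N^−} (∏_{i=1}^n c_{r_i+1}) · cos⁻_k(2(r_1+1/2)/(2N−1), …, 2(r_n+1/2)/(2N−1)) · cos⁻_{k'}(2(r_1+1/2)/(2N−1), …, 2(r_n+1/2)/(2N−1)) = d_k^{−1} · ((2N−1)/4)^n · δ_{k,k'}. -/
open Real Finset

/-- The coefficient `c_r`: `1/2` if `r = 0` or `r = N`, and `1` otherwise. -/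
noncomputable def cc (N r : ℕ) : ℝ := if r = 0 ∨ r = N then 1 / 2 else 1

/-! Writing `cos⁻_λ` at the nodes `x_{r_1}, …, x_{r_n}` as the minor on the columns `r` of the
`n × N` matrix `C_λ = (cos (π λ_i x_j))`, the sum becomes the Cauchy–Binet expansion of
`det (A C_{k'}ᵀ)`, where `A` is `C_k` with its columns weighted by `c_{j+1}`. The entries of
`A C_{k'}ᵀ` are the one-dimensional sums `Σ_j c_{j+1} cos (π a x_j) cos (π b x_j)`, which the
product formula and a telescoping sum of sines evaluate to `(2N-1)/(4 c_a) δ_{a,b}` for `a, b < N`.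
Hence `A C_{k'}ᵀ` is diagonal when `k = k'` and has a zero row otherwise. -/

open Matrix Equiv

section CauchyBinet

open scoped Classical

variable {ι : Type*} {n : ℕ} {R : Type*} [CommRing R]

theorem Matrix.det_mul_eq_sum_det_submatrix_mul_prod {m : Type*} [Fintype m] [DecidableEq m]
    [Fintype ι] (A : Matrix m ι R) (B : Matrix ι m R) :
    det (A * B) = ∑ p : m → ι, det (A.submatrix id p) * ∏ i, B (p i) i := by
  simp only [det_apply', mul_apply, prod_univ_sum, Fintype.piFinset_univ, mul_sum, sum_mul,
    submatrix_apply, id, prod_mul_distrib, mul_assoc]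
  exact sum_comm

variable [LinearOrder ι]

lemma exists_strictAnti_comp_perm_eq {p : Fin n → ι} (hp : p.Injective) :
    ∃ s : Fin n → ι, StrictAnti s ∧ ∃ σ : Perm (Fin n), s ∘ σ = p := by
  set τ := Tuple.sort (OrderDual.toDual ∘ p)
  have hanti : Antitone (p ∘ τ) := (Tuple.monotone_sort (OrderDual.toDual ∘ p)).dual_right
  refine ⟨p ∘ τ, hanti.strictAnti_of_injective (hp.comp τ.injective), τ⁻¹, ?_⟩
  ext i
  simp

lemma StrictAnti.comp_perm_inj {s s' : Fin n → ι} (hs : StrictAnti s) (hs' : StrictAnti s')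
    {σ σ' : Perm (Fin n)} (h : s ∘ σ = s' ∘ σ') : s = s' ∧ σ = σ' := by
  have hss' : s = s' := by
    rw [← hs.range_inj hs', ← σ.surjective.range_comp, h, σ'.surjective.range_comp]
  subst hss'
  exact ⟨rfl, Equiv.ext fun i => hs.injective (congrFun h i)⟩

lemma sum_injective_eq_sum_strictAnti_sum_perm [Fintype ι] {M : Type*} [AddCommMonoid M]
    (f : (Fin n → ι) → M) :
    ∑ p with p.Injective, f p = ∑ s with StrictAnti s, ∑ σ : Perm (Fin n), f (s ∘ σ) := by
  rw [← sum_product']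
  symm
  refine sum_nbij (fun x => x.1 ∘ x.2) ?_ ?_ ?_ fun _ _ => rfl
  · simp only [mem_product, mem_filter_univ]
    exact fun x hx => hx.1.injective.comp x.2.injective
  · rintro ⟨s, σ⟩ hx ⟨s', σ'⟩ hx' h
    simp only [coe_product, Set.mem_prod, mem_coe, mem_filter_univ] at hx hx'
    obtain ⟨rfl, rfl⟩ := hx.1.comp_perm_inj hx'.1 h
    rfl
  · intro p hp
    obtain ⟨s, hs, σ, rfl⟩ := exists_strictAnti_comp_perm_eq (by simpa using hp)
    exact ⟨(s, σ), by simpa using hs, rfl⟩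

theorem Matrix.det_mul_eq_sum_strictAnti [Fintype ι] (A : Matrix (Fin n) ι R)
    (B : Matrix ι (Fin n) R) :
    det (A * B) = ∑ s with StrictAnti s, det (A.submatrix id s) * det (B.submatrix s id) := by
  have hinj (p : Fin n → ι) (hp : det (A.submatrix id p) * ∏ i, B (p i) i ≠ 0) :
      p.Injective := by
    by_contra h
    obtain ⟨i, j, hij, hne⟩ := Function.not_injective_iff.1 h
    exact hp (by rw [det_zero_of_column_eq hne fun k => by simp [hij], zero_mul])
  rw [det_mul_eq_sum_det_submatrix_mul_prod, ← sum_filter_of_ne fun p _ => hinj p,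
    sum_injective_eq_sum_strictAnti_sum_perm]
  refine sum_congr rfl fun s _ => ?_
  rw [det_apply' (B.submatrix s id), mul_sum]
  refine sum_congr rfl fun σ _ => ?_
  rw [show A.submatrix id (s ∘ σ) = (A.submatrix id s).submatrix id σ from rfl, det_permute']
  simp only [submatrix_apply, id, Function.comp_apply]
  ring

end CauchyBinet

lemma Matrix.det_of_ite_eq {R : Type*} [CommRing R] {α : Type*} [LinearOrder α] {n : ℕ}
    {k k' : Fin n → α} (hk : StrictAnti k) (hk' : StrictAnti k') (d : Fin n → R) :
    det (of fun i j => if k i = k' j then d i else 0) = if k = k' then ∏ i, d i else 0 := by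
  split_ifs with h
  · subst h
    rw [show (of fun i j => if k i = k j then d i else 0) = diagonal d by
      ext i j; simp [diagonal_apply, hk.injective.eq_iff], det_diagonal]
  · obtain ⟨i, hi⟩ : ∃ i, ∀ j, k i ≠ k' j := by
      by_contra! hall
      choose f hf using hall
      have hf_surj : f.Surjective :=
        (Finite.injective_iff_bijective.1 fun a b hab => hk.injective (by rw [hf, hf, hab])).2
      exact h ((hk.range_inj hk').1 (by rw [show k = k' ∘ f from funext hf, hf_surj.range_comp]))
    exact det_eq_zero_of_row_eq_zero i fun j => by simp [hi j]

lemma two_mul_sin_mul_sum_range_cos_odd_mul (θ : ℝ) (K : ℕ) :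
    2 * sin θ * ∑ r ∈ range K, cos ((2 * r + 1) * θ) = sin (2 * K * θ) := by
  induction K with
  | zero => simp
  | succ K ih =>
    rw [sum_range_succ, mul_add, ih]
    have h₁ : 2 * ((K + 1 : ℕ) : ℝ) * θ = (2 * K + 1) * θ + θ := by push_cast; ring
    have h₂ : 2 * (K : ℝ) * θ = (2 * K + 1) * θ - θ := by ring
    rw [h₁, h₂, sin_add, sin_sub]
    ring

lemma cc_succ_of_lt {N r : ℕ} (h : r + 1 < N) : cc N (r + 1) = 1 :=
  if_neg (by omega)

lemma cc_self (N : ℕ) : cc N N = 1 / 2 :=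
  if_pos (Or.inr rfl)

lemma sum_range_cc_succ_mul (K : ℕ) (f : ℕ → ℝ) :
    ∑ r ∈ range (K + 1), cc (K + 1) (r + 1) * f r = ∑ r ∈ range (K + 1), f r - f K / 2 := by
  rw [sum_range_succ, sum_range_succ, cc_self,
    sum_congr rfl fun r hr => by rw [cc_succ_of_lt (by simp at hr; omega), one_mul]]
  ring

/-- The half weight on the last node turns the telescoped sum into a multiple of
`sin ((2K + 1) θ)`, which vanishes at the frequencies `θ = π m / (2K + 1)`. -/
lemma two_mul_sin_mul_sum_cc_mul_cos (K : ℕ) (θ : ℝ) :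
    2 * sin θ * ∑ r ∈ range (K + 1), cc (K + 1) (r + 1) * cos ((2 * r + 1) * θ)
      = sin ((2 * K + 1) * θ) * cos θ := by
  rw [sum_range_cc_succ_mul, mul_sub, two_mul_sin_mul_sum_range_cos_odd_mul]
  have h : 2 * ((K + 1 : ℕ) : ℝ) * θ = (2 * K + 1) * θ + θ := by push_cast; ring
  rw [h, sin_add]
  ring

noncomputable def node (N j : ℕ) : ℝ := 2 * ((j : ℝ) + 1 / 2) / (2 * N - 1)

lemma sum_range_cc_succ {N : ℕ} (hN : 1 ≤ N) :
    ∑ j ∈ range N, cc N (j + 1) = (2 * N - 1) / 2 := by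
  obtain ⟨K, rfl⟩ : ∃ K, N = K + 1 := ⟨N - 1, by omega⟩
  have h := sum_range_cc_succ_mul K fun _ => 1
  simp only [mul_one, sum_const, card_range, nsmul_eq_mul] at h
  rw [h]
  push_cast
  ring

lemma sum_range_cc_mul_cos_node_eq_zero {N : ℕ} (hN : 1 ≤ N) {m : ℤ}
    (hm : ¬ (2 * N - 1 : ℤ) ∣ m) :
    ∑ j ∈ range N, cc N (j + 1) * cos (π * m * node N j) = 0 := by
  obtain ⟨K, rfl⟩ : ∃ K, N = K + 1 := ⟨N - 1, by omega⟩
  set θ := π * m / (2 * K + 1)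
  have hK : (2 * ((K + 1 : ℕ) : ℝ) - 1) = 2 * K + 1 := by push_cast; ring
  have hθ : (2 * K + 1) * θ = m * π := by simp only [θ]; field_simp
  have hnode (j : ℕ) : π * m * node (K + 1) j = (2 * j + 1) * θ := by
    simp only [node, θ, hK]; field_simp
  have hsin : sin θ ≠ 0 := by
    rw [Ne, sin_eq_zero_iff]
    rintro ⟨j, hj⟩
    rw [← hj] at hθ
    have h : (m : ℝ) = (2 * K + 1) * j :=
      mul_left_cancel₀ pi_ne_zero (by linear_combination -hθ)
    exact hm ⟨j, by exact_mod_cast (by push_cast; linear_combination h :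
      (m : ℝ) = (2 * ((K + 1 : ℕ) : ℝ) - 1) * j)⟩
  have key := two_mul_sin_mul_sum_cc_mul_cos K θ
  rw [hθ, sin_int_mul_pi, zero_mul] at key
  simp only [hnode]
  exact (mul_eq_zero.1 key).resolve_left (mul_ne_zero two_ne_zero hsin)

lemma sum_cc_mul_cos_mul_cos_node {N a b : ℕ} (ha : a < N) (hb : b < N) :
    ∑ j : Fin N, cc N (j + 1) * cos (π * a * node N j) * cos (π * b * node N j)
      = if a = b then (2 * N - 1) / 4 * (cc N a)⁻¹ else 0 := by
  have hN : 1 ≤ N := by omega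
  set S : ℤ → ℝ := fun m => ∑ j ∈ range N, cc N (j + 1) * cos (π * m * node N j)
  have hS (m : ℤ) (h0 : m ≠ 0) (hlo : -(2 * N - 1 : ℤ) < m) (hhi : m < 2 * N - 1) : S m = 0 :=
    sum_range_cc_mul_cos_node_eq_zero hN fun hd =>
      h0 (Int.eq_zero_of_abs_lt_dvd hd (abs_lt.2 ⟨hlo, hhi⟩))
  have hS0 : S 0 = (2 * N - 1) / 2 := by simpa [S] using sum_range_cc_succ hN
  have hsplit : ∑ j : Fin N, cc N (j + 1) * cos (π * a * node N j) * cos (π * b * node N j)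
      = (S (a - b) + S (a + b)) / 2 := by
    rw [Fin.sum_univ_eq_sum_range (fun j => cc N (j + 1) *
      cos (π * a * node N j) * cos (π * b * node N j)), ← sum_add_distrib, sum_div]
    refine sum_congr rfl fun j _ => ?_
    have h := two_mul_cos_mul_cos (π * a * node N j) (π * b * node N j)
    have hsub : π * ((a : ℝ) - b) * node N j = π * a * node N j - π * b * node N j := by ring
    have hadd : π * ((a : ℝ) + b) * node N j = π * a * node N j + π * b * node N j := by ring
    push_cast
    rw [hsub, hadd]
    linear_combination (cc N (j + 1) / 2) * h
  rw [hsplit]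
  rcases eq_or_ne a b with rfl | hab
  · rcases eq_or_ne a 0 with rfl | ha0
    · simp [hS0, cc]
      ring
    · rw [sub_self, hS0, hS _ (by omega) (by omega) (by omega), if_pos rfl, cc,
        if_neg (by omega)]
      ring
  · rw [hS _ (by omega) (by omega) (by omega), hS _ (by omega) (by omega) (by omega), if_neg hab]
    simp

noncomputable def cosMatrix {n : ℕ} {ι : Type*} (lam : Fin n → ℝ) (x : ι → ℝ) :
    Matrix (Fin n) ι ℝ :=
  of fun i j => cos (π * lam i * x j)

lemma cosMinus_comp_eq_det_submatrix {n : ℕ} {ι : Type*} (lam : Fin n → ℝ) (x : ι → ℝ)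
    (r : Fin n → ι) :
    cosMinus n lam (x ∘ r) = det ((cosMatrix lam x).submatrix id r) := by
  rw [det_apply']
  rfl

lemma prod_mul_cosMinus_mul_cosMinus_eq_det_mul_det {n : ℕ} {ι : Type*} (w : ι → ℝ)
    (lam lam' : Fin n → ℝ) (x : ι → ℝ) (r : Fin n → ι) :
    (∏ i, w (r i)) * cosMinus n lam (x ∘ r) * cosMinus n lam' (x ∘ r)
      = det ((of fun i j => w j * cosMatrix lam x i j).submatrix id r)
        * det ((cosMatrix lam' x)ᵀ.submatrix r id) := by
  rw [cosMinus_comp_eq_det_submatrix, cosMinus_comp_eq_det_submatrix,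
    show (cosMatrix lam' x)ᵀ.submatrix r id = ((cosMatrix lam' x).submatrix id r)ᵀ from rfl,
    det_transpose, ← det_mul_row]
  rfl

lemma cc_mul_cosMatrix_node_mul_transpose {n N : ℕ} {k k' : Fin n → ℕ} (hk : ∀ i, k i < N)
    (hk' : ∀ i, k' i < N) :
    (of fun i (j : Fin N) => cc N (j + 1) * cosMatrix (k ·) (fun j : Fin N => node N j) i j) *
      (cosMatrix (k' ·) (fun j : Fin N => node N j))ᵀ
      = of fun i i' => if k i = k' i' then (2 * N - 1) / 4 * (cc N (k i))⁻¹ else 0 := by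
  ext i i'
  simp only [cosMatrix, mul_apply, of_apply, transpose_apply]
  exact sum_cc_mul_cos_mul_cos_node (hk i) (hk' i')

theorem AMDCT_VI_orthogonality_general (n N : ℕ) (hN : 1 ≤ N)
    (k k' : Fin n → ℕ)
    (hk : ∀ i j : Fin n, i < j → k j < k i) (hkb : ∀ i, k i ≤ N - 1)
    (hk' : ∀ i j : Fin n, i < j → k' j < k' i) (hk'b : ∀ i, k' i ≤ N - 1) :
    ∑ r ∈ Finset.univ.filter
        (fun r : Fin n → Fin N => ∀ i j : Fin n, i < j → (r j : ℕ) < (r i : ℕ)),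
      (∏ i : Fin n, cc N ((r i : ℕ) + 1)) *
        cosMinus n (fun i => (k i : ℝ))
          (fun i => 2 * (((r i : ℕ) : ℝ) + 1 / 2) / (2 * N - 1)) *
        cosMinus n (fun i => (k' i : ℝ))
          (fun i => 2 * (((r i : ℕ) : ℝ) + 1 / 2) / (2 * N - 1))
      = (∏ i : Fin n, cc N (k i))⁻¹ * ((2 * (N : ℝ) - 1) / 4) ^ n *
          (if k = k' then (1 : ℝ) else 0) := by
  classical
  set x : Fin N → ℝ := fun j => node N j
  set A : Matrix (Fin n) (Fin N) ℝ := of fun i j => cc N (j + 1) * cosMatrix (k ·) x i j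
  set B : Matrix (Fin N) (Fin n) ℝ := (cosMatrix (k' ·) x)ᵀ
  have hfilter :
      (univ.filter fun r : Fin n → Fin N => ∀ i j : Fin n, i < j → (r j : ℕ) < r i)
        = univ.filter StrictAnti := by
    ext r
    simp only [mem_filter, mem_univ, true_and]
    rfl
  have hAB : A * B
      = of fun i i' => if k i = k' i' then (2 * N - 1) / 4 * (cc N (k i))⁻¹ else 0 :=
    cc_mul_cosMatrix_node_mul_transpose (fun i => by have := hkb i; omega)
      (fun i => by have := hk'b i; omega)
  calc _ = ∑ r with StrictAnti r, det (A.submatrix id r) * det (B.submatrix r id) := by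
        rw [hfilter]
        exact sum_congr rfl fun r _ =>
          prod_mul_cosMinus_mul_cosMinus_eq_det_mul_det (fun j : Fin N => cc N (j + 1)) _ _ x r
    _ = det (A * B) := (det_mul_eq_sum_strictAnti A B).symm
    _ = (∏ i, (2 * N - 1) / 4 * (cc N (k i))⁻¹) * if k = k' then 1 else 0 := by
        rw [hAB, det_of_ite_eq hk hk', mul_ite, mul_one, mul_zero]
    _ = _ := by
        rw [prod_mul_distrib, prod_const, card_univ, Fintype.card_fin, prod_inv_distrib,
          mul_comm ((_ : ℝ) ^ n)]

theorem AMDCT_VI_orthogonality (n N : ℕ) (hn : 1 ≤ n) (hN : 1 ≤ N)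
    (k k' : Fin n → ℕ)
    (hk : ∀ i j : Fin n, i < j → k j < k i) (hkb : ∀ i, k i ≤ N - 1)
    (hk' : ∀ i j : Fin n, i < j → k' j < k' i) (hk'b : ∀ i, k' i ≤ N - 1) :
    ∑ r ∈ Finset.univ.filter
        (fun r : Fin n → Fin N => ∀ i j : Fin n, i < j → (r j : ℕ) < (r i : ℕ)),
      (∏ i : Fin n, cc N ((r i : ℕ) + 1)) *
        cosMinus n (fun i => (k i : ℝ))
          (fun i => 2 * (((r i : ℕ) : ℝ) + 1 / 2) / (2 * N - 1)) *
        cosMinus n (fun i => (k' i : ℝ))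
          (fun i => 2 * (((r i : ℕ) : ℝ) + 1 / 2) / (2 * N - 1))
      = (∏ i : Fin n, cc N (k i))⁻¹ * ((2 * (N : ℝ) - 1) / 4) ^ n *
          (if k = k' then (1 : ℝ) else 0) :=
  AMDCT_VI_orthogonality_general n N hN k k' hk hkb hk' hk'b
end

section
/- (SMDCT VI discrete orthogonality) Let N, n ≥ 1 and let k, k' ∈ D_N^+, i.e., integer vectors with N−1 ≥ k_1 ≥ … ≥ k_n ≥ 0 and N−1 ≥ k'_1 ≥ … ≥ k'_n ≥ 0. Then Σ_{r ∈ D_N^+} (∏_{i=1}^n c_{r_i+1}) · H_r^{−1} · cos⁺_k(2(r_1+1/2)/(2N−1), …, 2(r_n+1/2)/(2N−1)) · cos⁺_{k'}(2(r_1+1/2)/(2N−1), …, 2(r_n+1/2)/(2N−1)) = (H_k / d_k) · ((2N−1)/4)^n · δ_{k,k'}. -/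
open Real Finset

/-!
In one variable everything rests on the telescoping identity
`2 sin θ · Σ_{r<L} cos((2r+1)θ) = sin(2Lθ)`: with `θ = πm/(2N-1)` it shows that the weighted sum
`Σ_{t<N} c_{t+1} cos((2t+1)θ)` vanishes for `0 < |m| < 2N-1`, and product-to-sum turns this into
the discrete orthogonality of `cos(πa·x_t)` and `cos(πb·x_t)` on the nodes `x_t = (2t+1)/(2N-1)`.

In `n` variables, every `S_n`-orbit of `Fin n → Fin N` contains exactly one antitone tuple `r`,
and it has `n!/H_r` elements. Hence the `H_r⁻¹`-weighted sum over `D_N^+` is `1/n!` times the sum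
over all tuples, which for each pair of permutations `(σ, τ)` factors into a product of
one-variable sums. That product vanishes unless `k ∘ σ = k' ∘ τ`; for antitone `k, k'` this forces
`k = k'`, and then it happens for exactly `H_k` permutations `τ`.
-/

theorem two_mul_sin_mul_sum_range_cos (θ : ℝ) (L : ℕ) :
    2 * sin θ * ∑ r ∈ range L, cos ((2 * r + 1) * θ) = sin (2 * L * θ) := by
  induction L with
  | zero => simp
  | succ L ih =>
    rw [sum_range_succ, mul_add, ih, show (2 : ℝ) * L * θ = (2 * L + 1) * θ - θ by ring,
      show 2 * ((L + 1 : ℕ) : ℝ) * θ = (2 * L + 1) * θ + θ by push_cast; ring, sin_sub, sin_add]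
    ring

theorem sum_range_succ_cc_mul (L : ℕ) (f : ℕ → ℝ) :
    ∑ t ∈ range (L + 1), cc (L + 1) (t + 1) * f t = ∑ t ∈ range L, f t + f L / 2 := by
  rw [sum_range_succ, cc, if_pos (Or.inr rfl)]
  congr 1
  · refine sum_congr rfl fun t ht => ?_
    rw [cc, if_neg (by rw [mem_range] at ht; omega), one_mul]
  · ring

theorem sum_range_succ_cc_mul_cos_eq_zero (L : ℕ) {θ : ℝ} (hθ : sin θ ≠ 0)
    (hLθ : sin ((2 * L + 1) * θ) = 0) :
    ∑ t ∈ range (L + 1), cc (L + 1) (t + 1) * cos ((2 * t + 1) * θ) = 0 := by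
  have key : 2 * sin θ * ∑ t ∈ range (L + 1), cc (L + 1) (t + 1) * cos ((2 * t + 1) * θ)
      = sin ((2 * L + 1) * θ) * cos θ := by
    rw [sum_range_succ_cc_mul, mul_add, two_mul_sin_mul_sum_range_cos,
      show (2 : ℝ) * L * θ = (2 * L + 1) * θ - θ by ring, sin_sub]
    ring
  rw [hLθ, zero_mul] at key
  simpa [hθ] using key

theorem sin_pi_mul_div_ne_zero {x M : ℝ} (hx : |x| < M) (hx0 : x ≠ 0) :
    sin (π * x / M) ≠ 0 := by
  have hM : 0 < M := (abs_nonneg x).trans_lt hx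
  obtain ⟨hlo, hhi⟩ := abs_lt.mp hx
  rw [Ne, sin_eq_zero_iff_of_lt_of_lt]
  · simp [hx0, pi_ne_zero, hM.ne']
  · rw [lt_div_iff₀ hM]
    nlinarith [pi_pos]
  · rw [div_lt_iff₀ hM]
    nlinarith [pi_pos]

theorem sum_range_succ_cc_mul_cos_int_mul_pi_div (L : ℕ) {j : ℤ} (hj : |j| ≤ 2 * L) :
    ∑ t ∈ range (L + 1), cc (L + 1) (t + 1) * cos ((2 * t + 1) * (π * j / (2 * L + 1)))
      = if j = 0 then (2 * L + 1 : ℝ) / 2 else 0 := by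
  split_ifs with hj0
  · rw [sum_range_succ_cc_mul]
    simp only [hj0, Int.cast_zero, mul_zero, zero_div, cos_zero, mul_one, sum_const, card_range,
      nsmul_eq_mul]
    ring
  have hjM : |(j : ℝ)| < 2 * L + 1 := by
    have : |(j : ℝ)| ≤ 2 * L := by exact_mod_cast hj
    linarith
  refine sum_range_succ_cc_mul_cos_eq_zero L (sin_pi_mul_div_ne_zero hjM (by exact_mod_cast hj0)) ?_
  rw [mul_div_cancel₀ _ (by positivity), mul_comm, sin_int_mul_pi]

noncomputable def gridPoint (N t : ℕ) : ℝ := 2 * ((t : ℝ) + 1 / 2) / (2 * N - 1)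

theorem cos_mul_gridPoint_mul_cos_mul_gridPoint (L t a b : ℕ) :
    cos (π * a * gridPoint (L + 1) t) * cos (π * b * gridPoint (L + 1) t)
      = (cos ((2 * t + 1) * (π * ((a - b : ℤ) : ℝ) / (2 * L + 1)))
          + cos ((2 * t + 1) * (π * ((a + b : ℤ) : ℝ) / (2 * L + 1)))) / 2 := by
  have harg (c : ℝ) : π * c * gridPoint (L + 1) t = (2 * t + 1) * (π * c / (2 * L + 1)) := by
    rw [gridPoint, show 2 * ((L + 1 : ℕ) : ℝ) - 1 = 2 * L + 1 by push_cast; ring]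
    field_simp
  have hsub : (2 * t + 1) * (π * ((a - b : ℤ) : ℝ) / (2 * L + 1))
      = π * a * gridPoint (L + 1) t - π * b * gridPoint (L + 1) t := by
    rw [harg, harg]
    push_cast
    ring
  have hadd : (2 * t + 1) * (π * ((a + b : ℤ) : ℝ) / (2 * L + 1))
      = π * a * gridPoint (L + 1) t + π * b * gridPoint (L + 1) t := by
    rw [harg, harg]
    push_cast
    ring
  rw [hsub, hadd, cos_sub, cos_add]
  ring

theorem sum_cc_mul_cos_mul_cos_gridPoint {N a b : ℕ} (ha : a < N) (hb : b < N) :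
    ∑ t : Fin N, cc N (t + 1) * (cos (π * a * gridPoint N t) * cos (π * b * gridPoint N t))
      = if a = b then (2 * N - 1) / 4 / cc N a else 0 := by
  obtain ⟨L, rfl⟩ : ∃ L, N = L + 1 := ⟨N - 1, by omega⟩
  have hterm (t : ℕ) :
      cc (L + 1) (t + 1) * (cos (π * a * gridPoint (L + 1) t) * cos (π * b * gridPoint (L + 1) t))
        = (cc (L + 1) (t + 1) * cos ((2 * t + 1) * (π * ((a - b : ℤ) : ℝ) / (2 * L + 1)))
          + cc (L + 1) (t + 1) *
            cos ((2 * t + 1) * (π * ((a + b : ℤ) : ℝ) / (2 * L + 1)))) / 2 := by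
    rw [cos_mul_gridPoint_mul_cos_mul_gridPoint]
    ring
  rw [Fin.sum_univ_eq_sum_range fun t => cc (L + 1) (t + 1) *
      (cos (π * a * gridPoint (L + 1) t) * cos (π * b * gridPoint (L + 1) t))]
  simp_rw [hterm, ← sum_div, sum_add_distrib]
  rw [sum_range_succ_cc_mul_cos_int_mul_pi_div L (abs_le.mpr ⟨by omega, by omega⟩),
    sum_range_succ_cc_mul_cos_int_mul_pi_div L (abs_le.mpr ⟨by omega, by omega⟩)]
  rcases eq_or_ne a b with rfl | hab
  · rcases eq_or_ne a 0 with rfl | ha0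
    · norm_num [cc]
      ring
    · norm_num [cc, ha0, show a ≠ L + 1 by omega]
      ring
  · simp [hab, sub_eq_zero, show (a : ℤ) + b ≠ 0 by omega]

section Permutations

variable {n : ℕ} {α : Type*}

theorem Hstab_pos [DecidableEq α] (k : Fin n → α) : 0 < Hstab k :=
  card_pos.mpr ⟨1, by simp⟩

theorem Hstab_comp [DecidableEq α] (k : Fin n → α) (σ : Equiv.Perm (Fin n)) :
    Hstab (k ∘ σ) = Hstab k := by
  refine card_equiv (MulAut.conj σ).toEquiv fun τ => ?_
  simp only [mem_filter, mem_univ, true_and, MulEquiv.toEquiv_eq_coe, EquivLike.coe_coe,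
    MulAut.conj_apply, funext_iff, Function.comp_apply, Equiv.Perm.mul_apply]
  exact Equiv.forall_congr σ fun {i} => by simp

theorem card_filter_comp_eq [DecidableEq α] {k y : Fin n → α} {τ : Equiv.Perm (Fin n)}
    (hτ : k ∘ τ = y) : #{σ : Equiv.Perm (Fin n) | k ∘ σ = y} = Hstab y := by
  refine card_equiv (Equiv.mulLeft τ⁻¹) fun σ => ?_
  simp only [mem_filter, mem_univ, true_and, Equiv.coe_mulLeft, ← hτ, Equiv.Perm.coe_mul]
  rw [← Function.comp_assoc, Function.comp_assoc k, ← Equiv.Perm.coe_mul, mul_inv_cancel,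
    Equiv.Perm.coe_one, Function.comp_id]

theorem Antitone.comp_perm_eq [PartialOrder α] {f : Fin n → α} {σ : Equiv.Perm (Fin n)}
    (hf : Antitone f) (hfσ : Antitone (f ∘ σ)) : f ∘ σ = f :=
  Tuple.unique_antitone (τ := 1) hfσ hf

theorem card_filter_comp_eq_comp_of_antitone [PartialOrder α] [DecidableEq α] {k k' : Fin n → α}
    (hk : Antitone k) (hk' : Antitone k') (σ : Equiv.Perm (Fin n)) :
    #{τ : Equiv.Perm (Fin n) | k' ∘ τ = k ∘ σ} = if k = k' then Hstab k else 0 := by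
  split_ifs with hkk'
  · rw [← hkk', card_filter_comp_eq rfl, Hstab_comp]
  · refine card_eq_zero.mpr (filter_eq_empty_iff.mpr fun τ _ hτ => hkk' ?_)
    have hk'_eq : k ∘ ⇑(σ * τ⁻¹) = k' := by
      rw [Equiv.Perm.coe_mul, ← Function.comp_assoc, ← hτ, Function.comp_assoc,
        ← Equiv.Perm.coe_mul, mul_inv_cancel, Equiv.Perm.coe_one, Function.comp_id]
    rw [← hk'_eq, hk.comp_perm_eq (hk'_eq ▸ hk')]

theorem exists_perm_antitone_comp [LinearOrder α] (y : Fin n → α) :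
    ∃ σ : Equiv.Perm (Fin n), Antitone (y ∘ σ) :=
  ⟨Tuple.sort (OrderDual.toDual ∘ y), fun _ _ h => Tuple.monotone_sort (OrderDual.toDual ∘ y) h⟩

-- For `α = Fin N` this is the index set `D_N^+`.
open scoped Classical in
noncomputable def antitoneTuples (n : ℕ) (α : Type*) [Fintype α] [Preorder α] :
    Finset (Fin n → α) :=
  univ.filter fun r => Antitone r

@[simp]
theorem mem_antitoneTuples [Fintype α] [Preorder α] {r : Fin n → α} :
    r ∈ antitoneTuples n α ↔ Antitone r := by
  simp only [antitoneTuples, mem_filter, mem_univ, true_and]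

variable [Fintype α] [LinearOrder α]

theorem card_filter_antitone_comp_eq (y : Fin n → α) :
    #{p ∈ (univ : Finset (Equiv.Perm (Fin n))) ×ˢ antitoneTuples n α | p.2 ∘ p.1 = y}
      = Hstab y := by
  obtain ⟨σ₀, hσ₀⟩ := exists_perm_antitone_comp y
  have hfiber : {p ∈ (univ : Finset (Equiv.Perm (Fin n))) ×ˢ antitoneTuples n α | p.2 ∘ p.1 = y}
      = (univ.filter fun σ : Equiv.Perm (Fin n) => (y ∘ σ₀) ∘ σ = y) ×ˢ {y ∘ σ₀} := by
    ext ⟨σ, r⟩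
    simp only [mem_filter, mem_product, mem_univ, true_and, mem_singleton, mem_antitoneTuples]
    constructor
    · -- an antitone `r` with `r ∘ σ = y` must be the sorted rearrangement `y ∘ σ₀`
      rintro ⟨hr, rfl⟩
      have hrσ : r ∘ (σ * σ₀) = r := hr.comp_perm_eq hσ₀
      exact ⟨by rw [show (r ∘ σ) ∘ σ₀ = r ∘ ⇑(σ * σ₀) from rfl, hrσ], hrσ.symm⟩
    · rintro ⟨hσ, rfl⟩
      exact ⟨hσ₀, hσ⟩
  rw [hfiber, card_product, card_singleton, mul_one, card_filter_comp_eq (τ := σ₀⁻¹)]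
  ext
  simp

theorem sum_antitoneTuples_inv_Hstab_mul {K : Type*} [Field K] [CharZero K]
    (F : (Fin n → α) → K) (hF : ∀ r (σ : Equiv.Perm (Fin n)), F (r ∘ σ) = F r) :
    ∑ r ∈ antitoneTuples n α, (Hstab r : K)⁻¹ * F r = (n.factorial : K)⁻¹ * ∑ s, F s := by
  set G : (Fin n → α) → K := fun s => (Hstab s : K)⁻¹ * F s
  have hG (r : Fin n → α) (σ : Equiv.Perm (Fin n)) : G (r ∘ σ) = G r := by
    simp only [G, Hstab_comp, hF]
  have hHG (s : Fin n → α) : Hstab s * G s = F s :=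
    mul_inv_cancel_left₀ (Nat.cast_ne_zero.mpr (Hstab_pos s).ne') _
  rw [eq_inv_mul_iff_mul_eq₀ (Nat.cast_ne_zero.mpr n.factorial_ne_zero)]
  calc (n.factorial : K) * ∑ r ∈ antitoneTuples n α, G r
      = ∑ σ : Equiv.Perm (Fin n), ∑ r ∈ antitoneTuples n α, G (r ∘ σ) := by
        simp [hG, Fintype.card_perm]
    _ = ∑ p ∈ (univ : Finset (Equiv.Perm (Fin n))) ×ˢ antitoneTuples n α, G (p.2 ∘ p.1) :=
        by rw [sum_product]
    _ = ∑ s, ∑ p ∈ (univ : Finset (Equiv.Perm (Fin n))) ×ˢ antitoneTuples n α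
          with p.2 ∘ p.1 = s, G s := by rw [sum_fiberwise']
    _ = ∑ s, F s := by simp [card_filter_antitone_comp_eq, hHG]

end Permutations

theorem cosPlus_comp {n : ℕ} (lam x : Fin n → ℝ) (σ : Equiv.Perm (Fin n)) :
    cosPlus n lam (x ∘ σ) = cosPlus n lam x := by
  refine Fintype.sum_equiv (Equiv.mulRight σ⁻¹) _ _ fun τ => ?_
  exact Fintype.prod_equiv σ _ _ fun i => by simp

theorem sum_prod_mul_cosPlus_mul_cosPlus {n : ℕ} {α : Type*} [Fintype α] (w x : α → ℝ)
    (lam mu : Fin n → ℝ) :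
    ∑ s : Fin n → α,
        (∏ i, w (s i)) * (cosPlus n lam (fun i => x (s i)) * cosPlus n mu (fun i => x (s i)))
      = ∑ σ : Equiv.Perm (Fin n), ∑ τ : Equiv.Perm (Fin n),
          ∏ i, ∑ t, w t * (cos (π * lam (σ i) * x t) * cos (π * mu (τ i) * x t)) := by
  calc _ = ∑ s : Fin n → α, ∑ σ : Equiv.Perm (Fin n), ∑ τ : Equiv.Perm (Fin n),
        ∏ i, w (s i) * (cos (π * lam (σ i) * x (s i)) * cos (π * mu (τ i) * x (s i))) := by
        refine sum_congr rfl fun s _ => ?_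
        simp only [cosPlus, prod_mul_distrib]
        rw [sum_mul_sum, mul_sum]
        exact sum_congr rfl fun σ _ => mul_sum _ _ _
    _ = _ := by
        simp_rw [Fintype.prod_sum]
        rw [sum_comm]
        exact sum_congr rfl fun _ _ => sum_comm

theorem sum_prod_cc_mul_cosPlus_gridPoint_mul_cosPlus {n N : ℕ} {k k' : Fin n → ℕ}
    (hk : ∀ i, k i < N) (hk' : ∀ i, k' i < N) :
    ∑ s : Fin n → Fin N, (∏ i, cc N (s i + 1)) *
        (cosPlus n (fun i => (k i : ℝ)) (fun i => gridPoint N (s i)) *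
          cosPlus n (fun i => (k' i : ℝ)) (fun i => gridPoint N (s i)))
      = ∑ σ : Equiv.Perm (Fin n), (#{τ : Equiv.Perm (Fin n) | k' ∘ τ = k ∘ σ} : ℝ) *
          (((2 * N - 1) / 4) ^ n / ∏ i, cc N (k i)) := by
  rw [sum_prod_mul_cosPlus_mul_cosPlus (fun t : Fin N => cc N (t + 1)) (fun t => gridPoint N t)]
  refine sum_congr rfl fun σ _ => ?_
  have hprod (τ : Equiv.Perm (Fin n)) :
      ∏ i, ∑ t : Fin N, cc N (t + 1) *
          (cos (π * k (σ i) * gridPoint N t) * cos (π * k' (τ i) * gridPoint N t))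
        = if k' ∘ τ = k ∘ σ then ((2 * N - 1) / 4) ^ n / ∏ i, cc N (k i) else 0 := by
    simp_rw [sum_cc_mul_cos_mul_cos_gridPoint (hk _) (hk' _), Fintype.prod_ite_zero,
      Equiv.prod_comp σ (fun i => (2 * N - 1) / 4 / cc N (k i)), prod_div_distrib, prod_const,
      card_univ, Fintype.card_fin, funext_iff, Function.comp_apply, eq_comm, div_pow]
  simp_rw [hprod, ← sum_filter, sum_const, nsmul_eq_mul]

theorem SMDCT_VI_orthogonality_general (n N : ℕ) (hN : 1 ≤ N)
    (k k' : Fin n → ℕ)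
    (hk : ∀ i j : Fin n, i ≤ j → k j ≤ k i) (hkb : ∀ i, k i ≤ N - 1)
    (hk' : ∀ i j : Fin n, i ≤ j → k' j ≤ k' i) (hk'b : ∀ i, k' i ≤ N - 1) :
    ∑ r ∈ Finset.univ.filter
        (fun r : Fin n → Fin N => ∀ i j : Fin n, i ≤ j → (r j : ℕ) ≤ (r i : ℕ)),
      (∏ i : Fin n, cc N ((r i : ℕ) + 1)) * ((Hstab r : ℝ))⁻¹ *
        cosPlus n (fun i => (k i : ℝ))
          (fun i => 2 * (((r i : ℕ) : ℝ) + 1 / 2) / (2 * N - 1)) *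
        cosPlus n (fun i => (k' i : ℝ))
          (fun i => 2 * (((r i : ℕ) : ℝ) + 1 / 2) / (2 * N - 1))
      = (Hstab k : ℝ) / (∏ i : Fin n, cc N (k i)) * ((2 * (N : ℝ) - 1) / 4) ^ n *
          (if k = k' then (1 : ℝ) else 0) := by
  set F : (Fin n → Fin N) → ℝ := fun s => (∏ i, cc N (s i + 1)) *
    (cosPlus n (fun i => (k i : ℝ)) (fun i => gridPoint N (s i)) *
      cosPlus n (fun i => (k' i : ℝ)) (fun i => gridPoint N (s i)))
  have hF (r : Fin n → Fin N) (σ : Equiv.Perm (Fin n)) : F (r ∘ σ) = F r := by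
    simp only [F, Function.comp_apply, Equiv.prod_comp σ (fun i => cc N (r i + 1))]
    congr 2 <;> exact cosPlus_comp _ (fun i => gridPoint N (r i)) σ
  have hA : univ.filter (fun r : Fin n → Fin N => ∀ i j : Fin n, i ≤ j → (r j : ℕ) ≤ (r i : ℕ))
      = antitoneTuples n (Fin N) := by
    ext r
    simp only [mem_filter, mem_univ, true_and, mem_antitoneTuples]
    exact ⟨fun h i j hij => h i j hij, fun h i j hij => h hij⟩
  have hkN (i : Fin n) : k i < N := (Nat.le_sub_one_iff_lt hN).mp (hkb i)
  have hk'N (i : Fin n) : k' i < N := (Nat.le_sub_one_iff_lt hN).mp (hk'b i)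
  calc _ = ∑ r ∈ antitoneTuples n (Fin N), (Hstab r : ℝ)⁻¹ * F r := by
        rw [hA]
        exact sum_congr rfl fun r _ => by simp only [F, gridPoint]; ring
    _ = (n.factorial : ℝ)⁻¹ * ∑ σ : Equiv.Perm (Fin n),
          ((if k = k' then Hstab k else 0 : ℕ) : ℝ) *
            (((2 * N - 1) / 4) ^ n / ∏ i, cc N (k i)) := by
        rw [sum_antitoneTuples_inv_Hstab_mul F hF,
          sum_prod_cc_mul_cosPlus_gridPoint_mul_cosPlus hkN hk'N]
        simp_rw [card_filter_comp_eq_comp_of_antitone (fun i j h => hk i j h)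
          (fun i j h => hk' i j h)]
    _ = _ := by
        rw [sum_const, card_univ, Fintype.card_perm, Fintype.card_fin, nsmul_eq_mul]
        split_ifs
        · field_simp
        · simp

theorem SMDCT_VI_orthogonality (n N : ℕ) (hn : 1 ≤ n) (hN : 1 ≤ N)
    (k k' : Fin n → ℕ)
    (hk : ∀ i j : Fin n, i ≤ j → k j ≤ k i) (hkb : ∀ i, k i ≤ N - 1)
    (hk' : ∀ i j : Fin n, i ≤ j → k' j ≤ k' i) (hk'b : ∀ i, k' i ≤ N - 1) :
    ∑ r ∈ Finset.univ.filter
        (fun r : Fin n → Fin N => ∀ i j : Fin n, i ≤ j → (r j : ℕ) ≤ (r i : ℕ)),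
      (∏ i : Fin n, cc N ((r i : ℕ) + 1)) * ((Hstab r : ℝ))⁻¹ *
        cosPlus n (fun i => (k i : ℝ))
          (fun i => 2 * (((r i : ℕ) : ℝ) + 1 / 2) / (2 * N - 1)) *
        cosPlus n (fun i => (k' i : ℝ))
          (fun i => 2 * (((r i : ℕ) : ℝ) + 1 / 2) / (2 * N - 1))
      = (Hstab k : ℝ) / (∏ i : Fin n, cc N (k i)) * ((2 * (N : ℝ) - 1) / 4) ^ n *
          (if k = k' then (1 : ℝ) else 0) :=
  SMDCT_VI_orthogonality_general n N hN k k' hk hkb hk' hk'b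
end
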